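/- arXiv:1601.03782 — 2 statements merged into one kernel-verified Lean document; each statement's English description precedes it below -/
import Mathlib

section
/- Purity-based lower bounds on the robustness of asymmetry: for every state ρ on ℂ^d and every real c > 0 such that c·I − E(ρ) is positive semidefinite, RoA(ρ) ≥ (Re Tr[ρ²] − Re Tr[E(ρ)²]) / c. In particular, RoA(ρ) ≥ (Re Tr[ρ²] − Re Tr[E(ρ)²]) / √(Re Tr[E(ρ)²]) and RoA(ρ) ≥ Re Tr[ρ²] − Re Tr[E(ρ)²]. -/
/-
Put Δ = ρ - E(ρ). Since E is idempotent and self-adjoint for the trace pairing, Δ is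
trace-orthogonal to every symmetric matrix, in particular to σ and to E(ρ). Hence if σ is a
symmetric state and A = (1 + s)σ - ρ ⪰ 0, then
  Tr ρ² - Tr E(ρ)² = Tr(E(ρ) A) - Tr(ρ A) ≤ Tr(E(ρ) A) ≤ c Tr A = c s
whenever E(ρ) ⪯ c I. Both √(Tr E(ρ)²) and Tr E(ρ) = 1 bound the eigenvalues of E(ρ) from above,
giving the two special cases. The infimum is over a nonempty set: s = |G| - 1, σ = E(ρ) is feasible.
-/

open Matrix ComplexOrder

noncomputable section

/-- A state (density matrix): positive semidefinite with trace 1. -/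
def IsState {d : ℕ} (ρ : Matrix (Fin d) (Fin d) ℂ) : Prop :=
  ρ.PosSemidef ∧ ρ.trace = 1

/-- Group average of a matrix under a unitary representation. -/
def grpAvg {d : ℕ} {G : Type*} [Fintype G] [Group G]
    (U : G →* Matrix.unitaryGroup (Fin d) ℂ) (X : Matrix (Fin d) (Fin d) ℂ) :
    Matrix (Fin d) (Fin d) ℂ :=
  (Fintype.card G : ℂ)⁻¹ •
    ∑ g : G, (U g : Matrix (Fin d) (Fin d) ℂ) * X * ((U g : Matrix (Fin d) (Fin d) ℂ))ᴴ

/-- The robustness of asymmetry. -/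
def RoA {d : ℕ} {G : Type*} [Fintype G] [Group G]
    (U : G →* Matrix.unitaryGroup (Fin d) ℂ) (ρ : Matrix (Fin d) (Fin d) ℂ) : ℝ :=
  sInf { s : ℝ | 0 ≤ s ∧ ∃ σ : Matrix (Fin d) (Fin d) ℂ,
    IsState σ ∧ grpAvg U σ = σ ∧ ((1 + s) • σ - ρ).PosSemidef }

namespace Matrix

variable {n 𝕜 : Type*} [Fintype n] [RCLike 𝕜] {A B : Matrix n n 𝕜}

open scoped MatrixOrder in
theorem PosSemidef.trace_mul_nonneg (hA : A.PosSemidef) (hB : B.PosSemidef) :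
    0 ≤ (A * B).trace := by
  classical
  obtain ⟨C, rfl⟩ := CStarAlgebra.nonneg_iff_eq_star_mul_self.mp hB.nonneg
  rw [← mul_assoc, trace_mul_cycle]
  exact (hA.mul_mul_conjTranspose_same C).trace_nonneg

open scoped MatrixOrder in
theorem IsHermitian.posSemidef_smul_one_sub [DecidableEq n] (hA : A.IsHermitian) {c : ℝ}
    (h : ∀ i, hA.eigenvalues i ≤ c) : (c • (1 : Matrix n n 𝕜) - A).PosSemidef := by
  rw [← Algebra.algebraMap_eq_smul_one, ← le_iff]
  refine le_algebraMap_of_spectrum_le fun x hx => ?_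
  obtain ⟨i, rfl⟩ := hA.spectrum_real_eq_range_eigenvalues ▸ hx
  exact h i

theorem IsHermitian.trace_mul_self [DecidableEq n] (hA : A.IsHermitian) :
    (A * A).trace = ∑ i, ((hA.eigenvalues i ^ 2 : ℝ) : 𝕜) := by
  conv_lhs => rw [hA.spectral_theorem, ← map_mul]
  rw [Unitary.conjStarAlgAut_apply, trace_mul_cycle,
    Unitary.coe_star_mul_self, one_mul, diagonal_mul_diagonal, trace_diagonal]
  simp [sq]

theorem IsHermitian.re_trace_mul_self [DecidableEq n] (hA : A.IsHermitian) :
    RCLike.re (A * A).trace = ∑ i, hA.eigenvalues i ^ 2 := by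
  simp [hA.trace_mul_self, map_sum]

theorem IsHermitian.posSemidef_sqrt_smul_one_sub [DecidableEq n] (hA : A.IsHermitian) :
    (√(RCLike.re (A * A).trace) • (1 : Matrix n n 𝕜) - A).PosSemidef := by
  classical
  refine hA.posSemidef_smul_one_sub fun i => (le_abs_self _).trans (Real.abs_le_sqrt ?_)
  rw [hA.re_trace_mul_self]
  exact Finset.single_le_sum (fun j _ => sq_nonneg (hA.eigenvalues j)) (Finset.mem_univ i)

theorem IsHermitian.re_trace_mul_self_pos [DecidableEq n] (hA : A.IsHermitian) (h : A ≠ 0) :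
    0 < RCLike.re (A * A).trace := by
  classical
  obtain ⟨i, hi⟩ := Function.ne_iff.mp (hA.eigenvalues_eq_zero_iff.not.mpr h)
  rw [hA.re_trace_mul_self]
  exact Finset.sum_pos' (fun j _ => sq_nonneg _) ⟨i, Finset.mem_univ i, sq_pos_of_ne_zero hi⟩

theorem PosSemidef.posSemidef_re_trace_smul_one_sub [DecidableEq n] (hA : A.PosSemidef) :
    (RCLike.re A.trace • (1 : Matrix n n 𝕜) - A).PosSemidef := by
  classical
  refine hA.isHermitian.posSemidef_smul_one_sub fun i => ?_
  simp only [hA.isHermitian.trace_eq_sum_eigenvalues, map_sum, RCLike.ofReal_re]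
  exact Finset.single_le_sum (fun j _ => hA.eigenvalues_nonneg j) (Finset.mem_univ i)

end Matrix

theorem IsState.ne_zero {d : ℕ} {ρ : Matrix (Fin d) (Fin d) ℂ} (hρ : IsState ρ) : ρ ≠ 0 := by
  rintro rfl
  simpa using hρ.2

section GroupAverage

variable {d : ℕ} {G : Type*} [Fintype G] [Group G] (U : G →* Matrix.unitaryGroup (Fin d) ℂ)

theorem grpAvg_sub (X Y : Matrix (Fin d) (Fin d) ℂ) :
    grpAvg U (X - Y) = grpAvg U X - grpAvg U Y := by
  simp only [grpAvg, mul_sub, sub_mul, Finset.sum_sub_distrib, smul_sub]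

theorem trace_grpAvg (X : Matrix (Fin d) (Fin d) ℂ) : (grpAvg U X).trace = X.trace := by
  have hconj (g : G) :
      ((U g : Matrix (Fin d) (Fin d) ℂ) * X * (U g : Matrix (Fin d) (Fin d) ℂ)ᴴ).trace =
        X.trace := by
    rw [trace_mul_cycle, ← star_eq_conjTranspose, Unitary.coe_star_mul_self, one_mul]
  simp [grpAvg, trace_sum, hconj]

theorem conj_grpAvg (h : G) (X : Matrix (Fin d) (Fin d) ℂ) :
    (U h : Matrix (Fin d) (Fin d) ℂ) * grpAvg U X * (U h : Matrix (Fin d) (Fin d) ℂ)ᴴ =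
      grpAvg U X := by
  simp only [grpAvg, Matrix.mul_smul, Matrix.smul_mul, Finset.mul_sum, Finset.sum_mul]
  congr 1
  refine Fintype.sum_equiv (Equiv.mulLeft h) _ _ fun g => ?_
  simp [Matrix.mul_assoc, conjTranspose_mul]

theorem grpAvg_grpAvg (X : Matrix (Fin d) (Fin d) ℂ) : grpAvg U (grpAvg U X) = grpAvg U X := by
  rw [grpAvg]
  simp only [conj_grpAvg, Finset.sum_const, Finset.card_univ]
  rw [← Nat.cast_smul_eq_nsmul ℂ, smul_smul,
    inv_mul_cancel₀ (Nat.cast_ne_zero.2 Fintype.card_ne_zero), one_smul]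

theorem trace_mul_grpAvg (X Y : Matrix (Fin d) (Fin d) ℂ) :
    (X * grpAvg U Y).trace = (grpAvg U X * Y).trace := by
  simp only [grpAvg, Matrix.mul_smul, Matrix.smul_mul, trace_smul, Finset.mul_sum,
    Finset.sum_mul, trace_sum]
  congr 1
  refine Fintype.sum_equiv (Equiv.inv G) _ _ fun g => ?_
  rw [Equiv.inv_apply, map_inv, ← Unitary.star_eq_inv, Unitary.coe_star, star_eq_conjTranspose,
    conjTranspose_conjTranspose]
  simp only [Matrix.mul_assoc]
  rw [trace_mul_comm _ (X * _)]
  simp only [Matrix.mul_assoc]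

theorem trace_sub_grpAvg_mul_eq_zero (X : Matrix (Fin d) (Fin d) ℂ)
    {σ : Matrix (Fin d) (Fin d) ℂ} (hσ : grpAvg U σ = σ) :
    ((X - grpAvg U X) * σ).trace = 0 := by
  rw [← hσ, trace_mul_grpAvg, grpAvg_sub, grpAvg_grpAvg, sub_self, Matrix.zero_mul, trace_zero]

theorem Matrix.PosSemidef.grpAvg {X : Matrix (Fin d) (Fin d) ℂ} (hX : X.PosSemidef) :
    (grpAvg U X).PosSemidef := by
  refine PosSemidef.smul (posSemidef_sum _ fun g _ => hX.mul_mul_conjTranspose_same _) ?_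
  rw [← Complex.ofReal_natCast, ← Complex.ofReal_inv, Complex.zero_le_real]
  positivity

theorem IsState.grpAvg {X : Matrix (Fin d) (Fin d) ℂ} (hX : IsState X) :
    IsState (grpAvg U X) :=
  ⟨hX.1.grpAvg U, by rw [trace_grpAvg, hX.2]⟩

theorem card_smul_grpAvg (X : Matrix (Fin d) (Fin d) ℂ) :
    (Fintype.card G : ℝ) • grpAvg U X =
      ∑ g : G, (U g : Matrix (Fin d) (Fin d) ℂ) * X * (U g : Matrix (Fin d) (Fin d) ℂ)ᴴ := by
  rw [grpAvg, Nat.cast_smul_eq_nsmul, ← Nat.cast_smul_eq_nsmul ℂ, smul_smul,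
    mul_inv_cancel₀ (Nat.cast_ne_zero.2 Fintype.card_ne_zero), one_smul]

open scoped MatrixOrder in
theorem posSemidef_card_smul_grpAvg_sub {X : Matrix (Fin d) (Fin d) ℂ}
    (hX : X.PosSemidef) : ((Fintype.card G : ℝ) • grpAvg U X - X).PosSemidef := by
  rw [card_smul_grpAvg, ← le_iff]
  simpa using Finset.single_le_sum (fun g _ => (hX.mul_mul_conjTranspose_same
    (U g : Matrix (Fin d) (Fin d) ℂ)).nonneg) (Finset.mem_univ 1)

end GroupAverage

section RobustnessOfAsymmetry

variable {d : ℕ} {G : Type*} [Fintype G] [Group G] {U : G →* Matrix.unitaryGroup (Fin d) ℂ}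
  {ρ σ : Matrix (Fin d) (Fin d) ℂ}

theorem le_roA_of_forall (hρ : IsState ρ) {b : ℝ}
    (h : ∀ s, 0 ≤ s → ∀ σ, IsState σ → grpAvg U σ = σ → ((1 + s) • σ - ρ).PosSemidef → b ≤ s) :
    b ≤ RoA U ρ := by
  refine le_csInf ⟨Fintype.card G - 1, ?_, grpAvg U ρ, hρ.grpAvg U, grpAvg_grpAvg U ρ, ?_⟩ ?_
  · simpa using (Nat.one_le_cast.2 Fintype.card_pos : (1 : ℝ) ≤ Fintype.card G)
  · simpa using posSemidef_card_smul_grpAvg_sub U hρ.1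
  · rintro s ⟨hs, σ, hσ, hσ_sym, hA⟩
    exact h s hs σ hσ hσ_sym hA

theorem trace_mul_self_sub_trace_grpAvg_mul_self (hσ : grpAvg U σ = σ) (s : ℝ) :
    (ρ * ρ).trace - (grpAvg U ρ * grpAvg U ρ).trace =
      (grpAvg U ρ * ((1 + s) • σ - ρ)).trace - (ρ * ((1 + s) • σ - ρ)).trace := by
  have hσ_orth := trace_sub_grpAvg_mul_eq_zero U ρ hσ
  have hR_orth := trace_sub_grpAvg_mul_eq_zero U ρ (grpAvg_grpAvg U ρ)
  simp only [Matrix.sub_mul, Matrix.mul_sub, Matrix.mul_smul, trace_sub, trace_smul,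
    Complex.real_smul] at hσ_orth hR_orth ⊢
  rw [trace_mul_comm (grpAvg U ρ) ρ]
  linear_combination hR_orth + ((1 + s : ℝ) : ℂ) * hσ_orth

theorem purity_gap_le_mul (hρ : IsState ρ) {c : ℝ}
    (hc : (c • (1 : Matrix (Fin d) (Fin d) ℂ) - grpAvg U ρ).PosSemidef)
    (hσ : IsState σ) (hσ_sym : grpAvg U σ = σ) {s : ℝ} (hs : ((1 + s) • σ - ρ).PosSemidef) :
    (ρ * ρ).trace.re - (grpAvg U ρ * grpAvg U ρ).trace.re ≤ c * s := by
  set A := (1 + s) • σ - ρ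
  have hgap := congrArg Complex.re (trace_mul_self_sub_trace_grpAvg_mul_self (ρ := ρ) hσ_sym s)
  have hρA := (Complex.nonneg_iff.1 (hρ.1.trace_mul_nonneg hs)).1
  have hcA := (Complex.nonneg_iff.1 (hc.trace_mul_nonneg hs)).1
  have htrA : A.trace = s := by simp [A, trace_sub, hρ.2, hσ.2]
  simp only [Complex.sub_re] at hgap
  simp only [Matrix.sub_mul, smul_mul_assoc, Matrix.one_mul, trace_sub, trace_smul, htrA,
    Complex.sub_re, Complex.real_smul, Complex.re_ofReal_mul, Complex.ofReal_re] at hcA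
  linarith

end RobustnessOfAsymmetry

theorem roa_purity_lower_bounds_general {d : ℕ} {G : Type*} [Fintype G] [Group G]
    (U : G →* Matrix.unitaryGroup (Fin d) ℂ)
    (ρ : Matrix (Fin d) (Fin d) ℂ) (hρ : IsState ρ) :
    (∀ c : ℝ, 0 < c → (c • (1 : Matrix (Fin d) (Fin d) ℂ) - grpAvg U ρ).PosSemidef →
      ((ρ * ρ).trace.re - (grpAvg U ρ * grpAvg U ρ).trace.re) / c ≤ RoA U ρ) ∧
    ((ρ * ρ).trace.re - (grpAvg U ρ * grpAvg U ρ).trace.re) /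
        Real.sqrt ((grpAvg U ρ * grpAvg U ρ).trace.re) ≤ RoA U ρ ∧
    (ρ * ρ).trace.re - (grpAvg U ρ * grpAvg U ρ).trace.re ≤ RoA U ρ := by
  have hbound (c : ℝ) (hc : 0 < c)
      (hcR : (c • (1 : Matrix (Fin d) (Fin d) ℂ) - grpAvg U ρ).PosSemidef) :
      ((ρ * ρ).trace.re - (grpAvg U ρ * grpAvg U ρ).trace.re) / c ≤ RoA U ρ :=
    le_roA_of_forall hρ fun s _ σ hσ hσ_sym hs =>
      (div_le_iff₀' hc).2 (purity_gap_le_mul hρ hcR hσ hσ_sym hs)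
  have hR := hρ.grpAvg U
  refine ⟨hbound, hbound _ ?_ hR.1.isHermitian.posSemidef_sqrt_smul_one_sub, ?_⟩
  · exact Real.sqrt_pos.2 (hR.1.isHermitian.re_trace_mul_self_pos hR.ne_zero)
  · have hR_le_one : ((1 : ℝ) • (1 : Matrix (Fin d) (Fin d) ℂ) - grpAvg U ρ).PosSemidef := by
      simpa [hR.2] using hR.1.posSemidef_re_trace_smul_one_sub
    simpa using hbound 1 one_pos hR_le_one

theorem roa_purity_lower_bounds {d : ℕ} (hd : 1 ≤ d) {G : Type*} [Fintype G] [Group G]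
    (U : G →* Matrix.unitaryGroup (Fin d) ℂ)
    (ρ : Matrix (Fin d) (Fin d) ℂ) (hρ : IsState ρ) :
    (∀ c : ℝ, 0 < c → (c • (1 : Matrix (Fin d) (Fin d) ℂ) - grpAvg U ρ).PosSemidef →
      ((ρ * ρ).trace.re - (grpAvg U ρ * grpAvg U ρ).trace.re) / c ≤ RoA U ρ) ∧
    ((ρ * ρ).trace.re - (grpAvg U ρ * grpAvg U ρ).trace.re) /
        Real.sqrt ((grpAvg U ρ * grpAvg U ρ).trace.re) ≤ RoA U ρ ∧
    (ρ * ρ).trace.re - (grpAvg U ρ * grpAvg U ρ).trace.re ≤ RoA U ρ :=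
  roa_purity_lower_bounds_general U ρ hρ
end
end

section
/- Only maximally coherent states have maximal robustness of coherence: let d ≥ 2 and let ρ be a state on ℂ^d. Then RoC(ρ) = d − 1 if and only if ρ = ψψ† for some unit vector ψ ∈ ℂ^d with |ψ_j| = 1/√d for every j = 0, …, d−1. -/
/-!
Write `a i = ρ i i`. Positivity of the `2 × 2` principal minors gives
`‖ρ i j‖ ≤ √(a i a j) ≤ (a i + a j) / 2`, so `Cl1 ρ ≤ d - 1`, with equality only if every entry
has modulus `1 / d`; then every such minor vanishes, which forces `ρ = ψ ψ†` with `‖ψ j‖ = 1 / √d`.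
On the other hand `RoC ρ ≤ Cl1 ρ`, since `(1 + Cl1 ρ) • δ - ρ` is diagonally dominant for the
incoherent state `δ ∝ diag (a i + ∑_{j ≠ i} ‖ρ i j‖)`. Finally, for `ρ = ψ ψ†` the unimodular vector
`u = √d • ψ` has `u† ρ u = d`, while `u† δ u = tr δ = 1` for every incoherent state `δ`, so
`RoC ρ ≥ d - 1`.
-/

open Matrix ComplexOrder

noncomputable section

/-- The robustness of coherence (with respect to the standard basis). -/
def RoC {d : ℕ} (ρ : Matrix (Fin d) (Fin d) ℂ) : ℝ :=
  sInf { s : ℝ | 0 ≤ s ∧ ∃ δ : Matrix (Fin d) (Fin d) ℂ,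
    IsState δ ∧ δ.IsDiag ∧ ((1 + s) • δ - ρ).PosSemidef }

/-- The ℓ₁-norm of coherence: sum of absolute values of off-diagonal entries. -/
def Cl1 {d : ℕ} (ρ : Matrix (Fin d) (Fin d) ℂ) : ℝ :=
  ∑ i, ∑ j, if i = j then 0 else ‖ρ i j‖

namespace Matrix

variable {n 𝕜 : Type*} [RCLike 𝕜] {A : Matrix n n 𝕜}

lemma norm_vecMulVec_star_apply (v : n → 𝕜) (i j : n) :
    ‖vecMulVec v (star v) i j‖ = ‖v i‖ * ‖v j‖ := by
  rw [vecMulVec_apply, Pi.star_apply, norm_mul, norm_star]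

lemma IsDiag.star_dotProduct_mulVec_of_norm_eq_one [Fintype n] [DecidableEq n] (hA : A.IsDiag)
    {u : n → 𝕜} (hu : ∀ i, ‖u i‖ = 1) : star u ⬝ᵥ A *ᵥ u = A.trace := by
  conv_lhs => rw [← hA.diagonal_diag]
  refine Finset.sum_congr rfl fun i _ => ?_
  rw [Pi.star_apply, mulVec_diagonal, diag_apply, mul_left_comm, RCLike.star_def, RCLike.conj_mul,
    hu, RCLike.ofReal_one, one_pow, mul_one]

lemma IsHermitian.hasEigenvalue_eigenvalues [Fintype n] [DecidableEq n] (hA : A.IsHermitian)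
    (i : n) : Module.End.HasEigenvalue (toLin' A) (hA.eigenvalues i : 𝕜) := by
  refine Module.End.hasEigenvalue_of_hasEigenvector (x := ⇑(hA.eigenvectorBasis i))
    (Module.End.hasEigenvector_iff.mpr ⟨?_, ?_⟩)
  · rw [Module.End.mem_eigenspace_iff, toLin'_apply, hA.mulVec_eigenvectorBasis,
      RCLike.real_smul_eq_coe_smul (K := 𝕜)]
  · exact fun h => hA.eigenvectorBasis.orthonormal.ne_zero i
      (by simpa using congrArg (WithLp.toLp 2) h)

/-- By Gershgorin's circle theorem every eigenvalue `μ` satisfies `‖μ - A k k‖ ≤ re (A k k)` for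
some `k`. -/
lemma IsHermitian.posSemidef_of_sum_norm_le [Fintype n] [DecidableEq n] (hA : A.IsHermitian)
    (h : ∀ i, ∑ j ∈ Finset.univ.erase i, ‖A i j‖ ≤ RCLike.re (A i i)) : A.PosSemidef := by
  refine hA.posSemidef_iff_eigenvalues_nonneg.mpr fun i => ?_
  obtain ⟨k, hk⟩ := eigenvalue_mem_ball (hA.hasEigenvalue_eigenvalues i)
  rw [Metric.mem_closedBall, dist_eq_norm] at hk
  have hre : RCLike.re (A k k) - hA.eigenvalues i ≤ ‖(hA.eigenvalues i : 𝕜) - A k k‖ := by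
    rw [← norm_neg, neg_sub]
    simpa using RCLike.re_le_norm (A k k - hA.eigenvalues i)
  have hdom := h k
  simp only [Pi.zero_apply]
  linarith

namespace PosSemidef

lemma re_apply_self_nonneg (hA : A.PosSemidef) (i : n) : 0 ≤ RCLike.re (A i i) :=
  (RCLike.nonneg_iff.mp hA.diag_nonneg).1

lemma norm_apply_self (hA : A.PosSemidef) (i : n) : ‖A i i‖ = RCLike.re (A i i) := by
  conv_lhs => rw [← hA.1.coe_re_apply_self i]
  exact (RCLike.norm_ofReal _).trans (abs_of_nonneg (hA.re_apply_self_nonneg i))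

lemma norm_apply_sq_le [Fintype n] (hA : A.PosSemidef) (i j : n) :
    ‖A i j‖ ^ 2 ≤ RCLike.re (A i i) * RCLike.re (A j j) := by
  have hdet := (hA.submatrix ![i, j]).det_nonneg
  simp only [det_fin_two, submatrix_apply, cons_val_zero, cons_val_one] at hdet
  rw [← hA.1.apply j i, RCLike.star_def, RCLike.mul_conj, ← hA.1.coe_re_apply_self i,
    ← hA.1.coe_re_apply_self j] at hdet
  norm_cast at hdet
  linarith

lemma norm_apply_le_add_div_two [Fintype n] (hA : A.PosSemidef) (i j : n) :
    ‖A i j‖ ≤ (RCLike.re (A i i) + RCLike.re (A j j)) / 2 := by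
  nlinarith [hA.norm_apply_sq_le i j, hA.re_apply_self_nonneg i, hA.re_apply_self_nonneg j,
    sq_nonneg (RCLike.re (A i i) - RCLike.re (A j j)), norm_nonneg (A i j)]

/-- Summing `‖A i j‖ ≤ (A i i + A j j) / 2` gives `∑ i j, ‖A i j‖ ≤ card n * tr A`; in the equality
case every entry attains this bound, which forces a constant diagonal. -/
lemma norm_apply_eq_of_card_mul_le [Fintype n] (hA : A.PosSemidef)
    (h : Fintype.card n * RCLike.re A.trace ≤ ∑ i, ∑ j, ‖A i j‖) (i j : n) :
    ‖A i j‖ = RCLike.re A.trace / Fintype.card n := by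
  set a : n → ℝ := fun i => RCLike.re (A i i)
  have htr : RCLike.re A.trace = ∑ i, a i := map_sum _ _ _
  have hsum : ∑ i, ∑ j, (a i + a j) / 2 = Fintype.card n * RCLike.re A.trace := by
    simp only [add_div, Finset.sum_add_distrib, Finset.sum_const, ← Finset.sum_div, htr,
      Finset.card_univ, nsmul_eq_mul, ← Finset.mul_sum]
    ring
  have hle : ∀ i, ∑ j, ‖A i j‖ ≤ ∑ j, (a i + a j) / 2 :=
    fun i => Finset.sum_le_sum fun j _ => hA.norm_apply_le_add_div_two i j
  have hrow := (Finset.sum_eq_sum_iff_of_le fun i _ => hle i).mp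
    (le_antisymm (Finset.sum_le_sum fun i _ => hle i) (hsum ▸ h))
  have heq : ∀ i j, ‖A i j‖ = (a i + a j) / 2 := fun i j =>
    (Finset.sum_eq_sum_iff_of_le fun j _ => hA.norm_apply_le_add_div_two i j).mp
      (hrow i (Finset.mem_univ i)) j (Finset.mem_univ j)
  have hconst : ∀ j, a j = a i := fun j => by
    have hsq : ((a i + a j) / 2) ^ 2 ≤ a i * a j := heq i j ▸ hA.norm_apply_sq_le i j
    nlinarith [sq_nonneg (a i - a j)]
  have hcard : (0 : ℝ) < Fintype.card n := Nat.cast_pos.mpr (Fintype.card_pos_iff.mpr ⟨i⟩)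
  rw [heq, hconst j, htr, Finset.sum_congr rfl fun j _ => hconst j, Finset.sum_const,
    Finset.card_univ, nsmul_eq_mul]
  field_simp
  ring

lemma mul_apply_eq_of_norm_sq_eq [Fintype n] [DecidableEq n] (hA : A.PosSemidef) {j k : n}
    (h : ‖A j k‖ ^ 2 = RCLike.re (A j j) * RCLike.re (A k k)) (i : n) :
    A i j * A k k = A i k * A k j := by
  set x : n → 𝕜 := Pi.single j (A k k) - Pi.single k (A k j)
  have hkk : star (A k k) = A k k := hA.1.apply k k
  have hjk : star (A k j) = A j k := hA.1.apply j k
  have hform : star x ⬝ᵥ A *ᵥ x = 0 := by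
    simp only [x, star_sub, ← Pi.single_star, mulVec_sub, mulVec_single, sub_dotProduct,
      dotProduct_sub, single_dotProduct]
    have e : A j k * A k j = A j j * A k k := by
      rw [← hA.1.apply k j, RCLike.star_def, RCLike.mul_conj, ← hA.1.coe_re_apply_self j,
        ← hA.1.coe_re_apply_self k]
      exact_mod_cast h
    simp only [Pi.smul_apply, col_apply, op_smul_eq_mul, hkk, hjk]
    linear_combination -(A k k) * e
  have := congrFun ((hA.dotProduct_mulVec_zero_iff x).mp hform) i
  simpa [x, mulVec_sub, mulVec_single, sub_eq_zero, mul_comm] using this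

lemma exists_eq_vecMulVec [Fintype n] [DecidableEq n] (hA : A.PosSemidef) {k : n}
    (hk : 0 < RCLike.re (A k k))
    (h : ∀ j, ‖A j k‖ ^ 2 = RCLike.re (A j j) * RCLike.re (A k k)) :
    ∃ v : n → 𝕜, A = vecMulVec v (star v) := by
  set s : 𝕜 := ((√(RCLike.re (A k k)) : ℝ) : 𝕜)
  have hs : s * s = A k k := by
    rw [← RCLike.ofReal_mul, Real.mul_self_sqrt hk.le, hA.1.coe_re_apply_self]
  have hs0 : s ≠ 0 := RCLike.ofReal_ne_zero.mpr (Real.sqrt_pos.mpr hk).ne'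
  refine ⟨fun i => A i k / s, ?_⟩
  ext i j
  rw [vecMulVec_apply, Pi.star_apply, star_div₀, RCLike.star_def, RCLike.conj_ofReal,
    ← RCLike.star_def, hA.1.apply k j]
  field_simp
  linear_combination (hA.mul_apply_eq_of_norm_sq_eq (h j) i) + A i j * hs

end PosSemidef

end Matrix

section RobustnessOfCoherence

variable {d : ℕ} {ρ : Matrix (Fin d) (Fin d) ℂ}

lemma IsState.dim_pos (hρ : IsState ρ) : 0 < d := by
  rcases d with _ | d
  · simpa [trace] using hρ.2
  · exact d.succ_pos

lemma IsState.sum_norm_apply_self (hρ : IsState ρ) : ∑ i, ‖ρ i i‖ = 1 := by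
  simp_rw [hρ.1.norm_apply_self, RCLike.re_to_complex, ← Complex.re_sum]
  exact congrArg Complex.re hρ.2

lemma Cl1_nonneg : 0 ≤ Cl1 ρ :=
  Finset.sum_nonneg fun i _ => Finset.sum_nonneg fun j _ => by split_ifs <;> positivity

lemma Cl1_eq_sum_sum_erase (ρ : Matrix (Fin d) (Fin d) ℂ) :
    Cl1 ρ = ∑ i, ∑ j ∈ Finset.univ.erase i, ‖ρ i j‖ := by
  refine Finset.sum_congr rfl fun i _ => ?_
  rw [Finset.sum_ite, Finset.sum_const_zero, zero_add, Finset.filter_ne]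

lemma Cl1_eq_sum_sum_norm_sub (ρ : Matrix (Fin d) (Fin d) ℂ) :
    Cl1 ρ = ∑ i, ∑ j, ‖ρ i j‖ - ∑ i, ‖ρ i i‖ := by
  rw [Cl1_eq_sum_sum_erase, ← Finset.sum_sub_distrib]
  exact Finset.sum_congr rfl fun i _ => Finset.sum_erase_eq_sub (Finset.mem_univ i)

lemma RoC_le {s : ℝ} {δ : Matrix (Fin d) (Fin d) ℂ} (hs : 0 ≤ s) (hδ : IsState δ)
    (hδdiag : δ.IsDiag) (h : ((1 + s) • δ - ρ).PosSemidef) : RoC ρ ≤ s :=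
  csInf_le ⟨0, fun _ ht => ht.1⟩ ⟨hs, δ, hδ, hδdiag, h⟩

/-- The witness `(1 + Cl1 ρ) • δ` is the diagonal of `ρ` plus its off-diagonal row sums of
`‖ρ i j‖`, which makes `(1 + Cl1 ρ) • δ - ρ` diagonally dominant. -/
lemma IsState.exists_incoherent_Cl1 (hρ : IsState ρ) :
    ∃ δ, IsState δ ∧ δ.IsDiag ∧ ((1 + Cl1 ρ) • δ - ρ).PosSemidef := by
  set r : Fin d → ℝ := fun i => ∑ j ∈ Finset.univ.erase i, ‖ρ i j‖
  set D : Matrix (Fin d) (Fin d) ℂ := diagonal fun i => ρ i i + r i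
  have hpos : 0 < 1 + Cl1 ρ := by linarith [Cl1_nonneg (ρ := ρ)]
  have hD : (1 + Cl1 ρ) • (1 + Cl1 ρ)⁻¹ • D = D := by
    rw [smul_smul, mul_inv_cancel₀ hpos.ne', one_smul]
  refine ⟨(1 + Cl1 ρ)⁻¹ • D, ⟨?_, ?_⟩, (isDiag_diagonal _).smul _, ?_⟩
  · refine PosSemidef.smul (PosSemidef.diagonal fun i => ?_) (inv_pos.mpr hpos).le
    exact add_nonneg hρ.1.diag_nonneg (Complex.zero_le_real.mpr (by positivity))
  · have htr : ∑ i, ρ i i = 1 := hρ.2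
    rw [trace_smul, trace_diagonal, Finset.sum_add_distrib, htr, ← Complex.ofReal_sum,
      ← Cl1_eq_sum_sum_erase, Complex.real_smul]
    push_cast
    exact inv_mul_cancel₀ (by norm_cast; exact hpos.ne')
  · rw [hD]
    refine (IsHermitian.sub ?_ hρ.1.1).posSemidef_of_sum_norm_le fun i => ?_
    · refine isHermitian_diagonal_of_self_adjoint _ (funext fun i => ?_)
      simp [star_add, hρ.1.1.apply i i]
    · simp only [D, Matrix.sub_apply, diagonal_apply_eq, add_sub_cancel_left,
        RCLike.re_to_complex, Complex.ofReal_re]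
      refine le_of_eq (Finset.sum_congr rfl fun j hj => ?_)
      rw [diagonal_apply_ne _ (Finset.ne_of_mem_erase hj).symm, zero_sub, norm_neg]

lemma IsState.RoC_le_Cl1 (hρ : IsState ρ) : RoC ρ ≤ Cl1 ρ :=
  let ⟨_, hδ, hδdiag, h⟩ := hρ.exists_incoherent_Cl1
  RoC_le Cl1_nonneg hδ hδdiag h

/-- Test `(1 + s) • δ - ρ ≥ 0` against `u`, using `u† δ u = tr δ = 1` for diagonal `δ`. -/
lemma IsState.re_dotProduct_mulVec_sub_one_le_RoC (hρ : IsState ρ) {u : Fin d → ℂ}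
    (hu : ∀ i, ‖u i‖ = 1) : (star u ⬝ᵥ ρ *ᵥ u).re - 1 ≤ RoC ρ := by
  obtain ⟨δ, hδ, hδdiag, h⟩ := hρ.exists_incoherent_Cl1
  refine le_csInf ⟨_, Cl1_nonneg, δ, hδ, hδdiag, h⟩ ?_
  rintro s ⟨-, δ, hδ, hδdiag, h⟩
  have hu_nonneg := h.re_dotProduct_nonneg u
  rw [sub_mulVec, dotProduct_sub, smul_mulVec, dotProduct_smul,
    hδdiag.star_dotProduct_mulVec_of_norm_eq_one hu, hδ.2] at hu_nonneg
  simp only [map_sub, RCLike.re_to_complex, Complex.real_smul, mul_one,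
    Complex.ofReal_re] at hu_nonneg
  linarith

lemma IsState.norm_apply_eq_of_sub_one_le_Cl1 (hρ : IsState ρ) (h : (d : ℝ) - 1 ≤ Cl1 ρ)
    (i j : Fin d) : ‖ρ i j‖ = 1 / d := by
  have hρ1 : RCLike.re ρ.trace = 1 := by rw [hρ.2, RCLike.one_re]
  refine (hρ.1.norm_apply_eq_of_card_mul_le ?_ i j).trans (by rw [hρ1, Fintype.card_fin])
  rw [hρ1, Fintype.card_fin, mul_one]
  rw [Cl1_eq_sum_sum_norm_sub, hρ.sum_norm_apply_self] at h
  linarith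

lemma IsState.exists_eq_vecMulVec_of_sub_one_le_Cl1 (hρ : IsState ρ) (h : (d : ℝ) - 1 ≤ Cl1 ρ) :
    ∃ ψ : Fin d → ℂ, (∑ j, ‖ψ j‖ ^ 2 = 1) ∧ (∀ j, ‖ψ j‖ = 1 / √d) ∧
      ρ = vecMulVec ψ (star ψ) := by
  have hnorm := hρ.norm_apply_eq_of_sub_one_le_Cl1 h
  have hre : ∀ i, RCLike.re (ρ i i) = 1 / d := fun i => by rw [← hnorm i i, hρ.1.norm_apply_self]
  have hd : (0 : ℝ) < d := Nat.cast_pos.mpr hρ.dim_pos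
  obtain ⟨ψ, rfl⟩ := hρ.1.exists_eq_vecMulVec (k := ⟨0, hρ.dim_pos⟩) (by rw [hre]; positivity)
    fun j => by rw [hnorm, hre, hre]; ring
  have hsq : ∀ j, ‖ψ j‖ ^ 2 = 1 / d := fun j => by
    rw [← hnorm j j, norm_vecMulVec_star_apply, sq]
  refine ⟨ψ, ?_, fun j => ?_, rfl⟩
  · simp only [hsq, Finset.sum_const, Finset.card_univ, Fintype.card_fin, nsmul_eq_mul]
    field_simp
  · rw [← Real.sqrt_sq (norm_nonneg _), hsq, Real.sqrt_div' _ hd.le, Real.sqrt_one]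

lemma RoC_vecMulVec_eq {ψ : Fin d → ℂ} (hd : 0 < d) (hψ : ∀ j, ‖ψ j‖ = 1 / √d) :
    RoC (vecMulVec ψ (star ψ)) = d - 1 := by
  have hd₀ : (0 : ℝ) < d := Nat.cast_pos.mpr hd
  have hsq : ∀ j, ‖ψ j‖ ^ 2 = 1 / d := fun j => by rw [hψ, div_pow, one_pow, Real.sq_sqrt hd₀.le]
  have hentry : ∀ i j, ‖vecMulVec ψ (star ψ) i j‖ = 1 / d := fun i j => by
    rw [norm_vecMulVec_star_apply, hψ, hψ, div_mul_div_comm, one_mul, Real.mul_self_sqrt hd₀.le]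
  have hunit : ψ ⬝ᵥ star ψ = 1 := by
    simp only [dotProduct, Pi.star_apply, Complex.star_def, Complex.mul_conj',
      ← Complex.ofReal_pow, hsq, Finset.sum_const, Finset.card_univ, Fintype.card_fin, nsmul_eq_mul]
    push_cast
    field_simp
  have hρ : IsState (vecMulVec ψ (star ψ)) :=
    ⟨posSemidef_vecMulVec_self_star ψ, (trace_vecMulVec _ _).trans hunit⟩
  refine le_antisymm ?_ ?_
  · refine hρ.RoC_le_Cl1.trans_eq ?_
    rw [Cl1_eq_sum_sum_norm_sub, hρ.sum_norm_apply_self]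
    simp only [hentry, Finset.sum_const, Finset.card_univ, Fintype.card_fin, nsmul_eq_mul]
    field_simp
  · have hu : ∀ j, ‖(√(d : ℝ) • ψ) j‖ = 1 := fun j => by
      rw [Pi.smul_apply, norm_smul, Real.norm_of_nonneg (Real.sqrt_nonneg _), hψ]
      field_simp
    have hval : star (√(d : ℝ) • ψ) ⬝ᵥ vecMulVec ψ (star ψ) *ᵥ (√(d : ℝ) • ψ) = d := by
      rw [dotProduct_mulVec, vecMul_vecMulVec, smul_dotProduct, star_smul, star_trivial,
        smul_dotProduct, dotProduct_smul, dotProduct_comm (star ψ), hunit, smul_eq_mul,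
        Complex.real_smul, mul_one, ← Complex.ofReal_mul, Real.mul_self_sqrt hd₀.le,
        Complex.ofReal_natCast]
    have := hρ.re_dotProduct_mulVec_sub_one_le_RoC hu
    rwa [hval, Complex.natCast_re] at this

end RobustnessOfCoherence

theorem roc_maximal_iff_maximally_coherent_general {d : ℕ}
    (ρ : Matrix (Fin d) (Fin d) ℂ) (hρ : IsState ρ) :
    RoC ρ = (d : ℝ) - 1 ↔
      ∃ ψ : Fin d → ℂ, (∑ j, ‖ψ j‖ ^ 2 = 1) ∧
        (∀ j, ‖ψ j‖ = 1 / Real.sqrt d) ∧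
        ρ = Matrix.of fun i j => ψ i * star (ψ j) := by
  refine ⟨fun h => hρ.exists_eq_vecMulVec_of_sub_one_le_Cl1 (h ▸ hρ.RoC_le_Cl1), ?_⟩
  rintro ⟨ψ, -, hψ, rfl⟩
  exact RoC_vecMulVec_eq hρ.dim_pos hψ

theorem roc_maximal_iff_maximally_coherent {d : ℕ} (hd : 2 ≤ d)
    (ρ : Matrix (Fin d) (Fin d) ℂ) (hρ : IsState ρ) :
    RoC ρ = (d : ℝ) - 1 ↔
      ∃ ψ : Fin d → ℂ, (∑ j, ‖ψ j‖ ^ 2 = 1) ∧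
        (∀ j, ‖ψ j‖ = 1 / Real.sqrt d) ∧
        ρ = Matrix.of fun i j => ψ i * star (ψ j) :=
  roc_maximal_iff_maximally_coherent_general ρ hρ
end
end
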